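/- Let X, Z, U, V be finite random variables with Markov chain U → V → X → Z and suppose H(X|Y,V)=0 where Y is a further variable with U → V → X → (Y,Z). Then I(Y;V|U) − I(Z;V|U) + H(X|Z,V) = I(X;Y|U) − I(X;Z|U). -/

import Mathlib

open scoped BigOperators Classical

variable {Ω : Type} [Fintype Ω]

/-- Probability that the random variable `X` takes the value `x` under the pmf `p`. -/
noncomputable def prEq {α : Type} (p : Ω → ℝ) (X : Ω → α) (x : α) : ℝ :=
  ∑ ω, if X ω = x then p ω else 0

/-- Shannon entropy of a finite random variable. -/
noncomputable def ent {α : Type} [Fintype α] (p : Ω → ℝ) (X : Ω → α) : ℝ :=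
  ∑ x, Real.negMulLog (prEq p X x)

/-- Conditional Shannon entropy `H(X | Y)`. -/
noncomputable def condEnt {α β : Type} [Fintype α] [Fintype β]
    (p : Ω → ℝ) (X : Ω → α) (Y : Ω → β) : ℝ :=
  ent p (fun ω => (X ω, Y ω)) - ent p Y

/-- Mutual information `I(X ; Y)`. -/
noncomputable def mutInf {α β : Type} [Fintype α] [Fintype β]
    (p : Ω → ℝ) (X : Ω → α) (Y : Ω → β) : ℝ :=
  ent p X + ent p Y - ent p (fun ω => (X ω, Y ω))

/-- Conditional mutual information `I(X ; Y | Z)`. -/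
noncomputable def condMutInf {α β γ : Type} [Fintype α] [Fintype β] [Fintype γ]
    (p : Ω → ℝ) (X : Ω → α) (Y : Ω → β) (Z : Ω → γ) : ℝ :=
  condEnt p X Z - condEnt p X (fun ω => (Y ω, Z ω))

/-- `X` and `Y` are conditionally independent given `Z`. -/
def CondIndep {α β γ : Type} (p : Ω → ℝ) (X : Ω → α) (Y : Ω → β) (Z : Ω → γ) : Prop :=
  ∀ x y z,
    prEq p (fun ω => (X ω, Y ω, Z ω)) (x, y, z) * prEq p Z z =
      prEq p (fun ω => (X ω, Z ω)) (x, z) * prEq p (fun ω => (Y ω, Z ω)) (y, z)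

/-- `X` and `Y` are independent. -/
def Indep {α β : Type} (p : Ω → ℝ) (X : Ω → α) (Y : Ω → β) : Prop :=
  ∀ x y, prEq p (fun ω => (X ω, Y ω)) (x, y) = prEq p X x * prEq p Y y

/-- `p` is a probability mass function on `Ω`. -/
def IsPMF (p : Ω → ℝ) : Prop := (∀ ω, 0 ≤ p ω) ∧ ∑ ω, p ω = 1

/-! A Markov chain `A → C → B` makes `H(A | B, C) = H(A | C)`, a linear relation
`H(A,B,C) + H(C) = H(A,C) + H(B,C)` between joint entropies: writing every entropy as an
expectation over the law of `(A, B, C)`, it is the logarithm of `P(a,b,c) P(c) = P(a,c) P(b,c)`.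
The two chains supply six such relations (for `U–V–Y`, `U–V–Z`, `V–X–Y`, `V–X–Z`, `U–X–Y`,
`U–X–Z`), and these reduce Lemma 1's identity to linear arithmetic among joint entropies, up
to reordering the components of a triple. The lossless condition `H(X | Y, V) = 0` then removes
the first term on its right. -/

open Finset

lemma neg_mul_log_add_neg_mul_log_eq {q c a b : ℝ} (hq : 0 ≤ q) (hc : q ≤ c) (ha : q ≤ a)
    (hb : q ≤ b) (h : q * c = a * b) :
    -(q * Real.log q) + -(q * Real.log c) = -(q * Real.log a) + -(q * Real.log b) := by
  rcases hq.eq_or_lt with rfl | hq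
  · simp
  have hlog : Real.log q + Real.log c = Real.log a + Real.log b := by
    rw [← Real.log_mul hq.ne' (hq.trans_le hc).ne', ← Real.log_mul (hq.trans_le ha).ne'
      (hq.trans_le hb).ne', h]
  linear_combination (-q) * hlog

section

variable {α β γ δ : Type} (p : Ω → ℝ)

lemma prEq_nonneg (hp : ∀ ω, 0 ≤ p ω) (X : Ω → α) (x : α) : 0 ≤ prEq p X x :=
  sum_nonneg fun ω _ => by split <;> simp [hp ω]

lemma prEq_comp [Fintype α] (W : Ω → α) (h : α → β) (y : β) :
    prEq p (fun ω => h (W ω)) y = ∑ x with h x = y, prEq p W x := by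
  simp only [prEq]
  rw [sum_comm]
  refine sum_congr rfl fun ω _ => ?_
  simp [sum_ite_eq]

lemma prEq_comp_of_injective (W : Ω → α) {h : α → β} (hh : Function.Injective h) (x : α) :
    prEq p (fun ω => h (W ω)) (h x) = prEq p W x := by
  simp only [prEq, hh.eq_iff]

lemma prEq_le_prEq_comp [Fintype α] (hp : ∀ ω, 0 ≤ p ω) (W : Ω → α) (h : α → β) (x : α) :
    prEq p W x ≤ prEq p (fun ω => h (W ω)) (h x) := by
  rw [prEq_comp p W h]
  exact single_le_sum (fun a _ => prEq_nonneg p hp W a) (mem_filter.2 ⟨mem_univ x, rfl⟩)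

lemma prEq_map_fst [Fintype α] (A : Ω → α) (D : Ω → δ) (f : α → β) (x : β) (d : δ) :
    prEq p (fun ω => (f (A ω), D ω)) (x, d) =
      ∑ a with f a = x, prEq p (fun ω => (A ω, D ω)) (a, d) := by
  simp only [prEq]
  rw [sum_comm]
  refine sum_congr rfl fun ω _ => ?_
  by_cases hd : D ω = d <;> simp [hd, sum_ite_eq]

lemma prEq_swap (A : Ω → α) (B : Ω → β) (C : Ω → γ) (a : α) (b : β) (c : γ) :
    prEq p (fun ω => (B ω, A ω, C ω)) (b, a, c) =
      prEq p (fun ω => (A ω, B ω, C ω)) (a, b, c) := by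
  simp only [prEq, Prod.mk.injEq, and_left_comm]

lemma ent_comp_eq_sum [Fintype α] [Fintype β] (W : Ω → α) (h : α → β) :
    ent p (fun ω => h (W ω)) =
      ∑ x, -(prEq p W x * Real.log (prEq p (fun ω => h (W ω)) (h x))) := by
  rw [← sum_fiberwise univ h]
  refine sum_congr rfl fun y _ => ?_
  have fiber : ∀ x ∈ ({x | h x = y} : Finset α),
      -(prEq p W x * Real.log (prEq p (fun ω => h (W ω)) (h x))) =
        -(prEq p W x * Real.log (prEq p (fun ω => h (W ω)) y)) :=
    fun x hx => by rw [(mem_filter.1 hx).2]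
  rw [sum_congr rfl fiber, sum_neg_distrib, ← sum_mul, ← prEq_comp, Real.negMulLog, neg_mul]

lemma ent_eq_sum [Fintype α] (W : Ω → α) :
    ent p W = ∑ x, -(prEq p W x * Real.log (prEq p W x)) :=
  ent_comp_eq_sum p W id

lemma ent_comp_of_injective [Fintype α] [Fintype β] (W : Ω → α) {h : α → β}
    (hh : Function.Injective h) : ent p (fun ω => h (W ω)) = ent p W := by
  simp only [ent_comp_eq_sum p W h, prEq_comp_of_injective p W hh, ent_eq_sum p W]

section Permutations

variable [Fintype α] [Fintype β] [Fintype γ] (A : Ω → α) (B : Ω → β) (C : Ω → γ)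

lemma ent_prod_rotate : ent p (fun ω => (B ω, C ω, A ω)) = ent p (fun ω => (A ω, B ω, C ω)) :=
  ent_comp_of_injective p (fun ω => (A ω, B ω, C ω)) (h := fun t => (t.2.1, t.2.2, t.1))
    fun _ _ h => by simp_all [Prod.ext_iff]

lemma ent_prod_reverse : ent p (fun ω => (C ω, B ω, A ω)) = ent p (fun ω => (A ω, B ω, C ω)) :=
  ent_comp_of_injective p (fun ω => (A ω, B ω, C ω)) (h := fun t => (t.2.2, t.2.1, t.1))
    fun _ _ h => by simp_all [Prod.ext_iff]

end Permutations

namespace CondIndep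

variable {p} {A : Ω → α} {B : Ω → β} {C : Ω → γ}

lemma symm (h : CondIndep p A B C) : CondIndep p B A C := fun b a c => by
  rw [prEq_swap, h a b c, mul_comm]

lemma comp_left [Fintype α] (h : CondIndep p A B C) (f : α → δ) :
    CondIndep p (fun ω => f (A ω)) B C := fun x b c => by
  rw [prEq_map_fst p A (fun ω => (B ω, C ω)), prEq_map_fst p A C, sum_mul, sum_mul]
  exact sum_congr rfl fun a _ => h a b c

lemma comp_right [Fintype β] (h : CondIndep p A B C) (g : β → δ) :
    CondIndep p A (fun ω => g (B ω)) C :=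
  (h.symm.comp_left g).symm

theorem condEnt_eq [Fintype α] [Fintype β] [Fintype γ] (hp : ∀ ω, 0 ≤ p ω)
    (h : CondIndep p A B C) :
    condEnt p A (fun ω => (B ω, C ω)) = condEnt p A C := by
  rw [condEnt, condEnt, sub_eq_sub_iff_add_eq_add]
  set W : Ω → α × β × γ := fun ω => (A ω, B ω, C ω)
  have hC : ent p C = ∑ t, -(prEq p W t * Real.log (prEq p C t.2.2)) :=
    ent_comp_eq_sum p W fun t => t.2.2
  have hAC : ent p (fun ω => (A ω, C ω)) =
      ∑ t, -(prEq p W t * Real.log (prEq p (fun ω => (A ω, C ω)) (t.1, t.2.2))) :=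
    ent_comp_eq_sum p W fun t => (t.1, t.2.2)
  have hBC : ent p (fun ω => (B ω, C ω)) =
      ∑ t, -(prEq p W t * Real.log (prEq p (fun ω => (B ω, C ω)) t.2)) :=
    ent_comp_eq_sum p W fun t => t.2
  rw [hC, hAC, hBC, ent_eq_sum p W, ← sum_add_distrib, ← sum_add_distrib]
  exact sum_congr rfl fun t _ => neg_mul_log_add_neg_mul_log_eq (prEq_nonneg p hp W t)
    (prEq_le_prEq_comp p hp W (fun t => t.2.2) t)
    (prEq_le_prEq_comp p hp W (fun t => (t.1, t.2.2)) t)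
    (prEq_le_prEq_comp p hp W (fun t => t.2) t) (h t.1 t.2.1 t.2.2)

end CondIndep

end

theorem condMutInf_sub_condMutInf_add_condEnt_of_markov {𝓤 𝓥 𝓧 𝓨 𝓩 : Type} [Fintype 𝓤]
    [Fintype 𝓥] [Fintype 𝓧] [Fintype 𝓨] [Fintype 𝓩] (p : Ω → ℝ) (hp : ∀ ω, 0 ≤ p ω)
    (U : Ω → 𝓤) (V : Ω → 𝓥) (X : Ω → 𝓧) (Y : Ω → 𝓨) (Z : Ω → 𝓩)
    (hmc1 : CondIndep p U (fun ω => (X ω, Y ω, Z ω)) V)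
    (hmc2 : CondIndep p (fun ω => (U ω, V ω)) (fun ω => (Y ω, Z ω)) X) :
    condMutInf p Y V U - condMutInf p Z V U + condEnt p X (fun ω => (Z ω, V ω)) =
      condEnt p X (fun ω => (Y ω, V ω)) + condMutInf p X Y U - condMutInf p X Z U := by
  have hUYV := (hmc1.comp_right fun t => t.2.1).condEnt_eq hp
  have hUZV := (hmc1.comp_right fun t => t.2.2).condEnt_eq hp
  have hVYX := ((hmc2.comp_left Prod.snd).comp_right Prod.fst).condEnt_eq hp
  have hVZX := ((hmc2.comp_left Prod.snd).comp_right Prod.snd).condEnt_eq hp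
  have hUYX := ((hmc2.comp_left Prod.fst).comp_right Prod.fst).condEnt_eq hp
  have hUZX := ((hmc2.comp_left Prod.fst).comp_right Prod.snd).condEnt_eq hp
  simp only [condMutInf, condEnt] at hUYV hUZV hVYX hVZX hUYX hUZX ⊢
  linarith [ent_prod_rotate p U Y V, ent_prod_rotate p U Z V, ent_prod_reverse p V Y X,
    ent_prod_reverse p V Z X, ent_prod_reverse p U Y X, ent_prod_reverse p U Z X]

theorem stmt13 {𝓤 𝓥 𝓧 𝓨 𝓩 : Type} [Fintype 𝓤] [Fintype 𝓥] [Fintype 𝓧] [Fintype 𝓨] [Fintype 𝓩]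
    (p : Ω → ℝ) (hp : IsPMF p)
    (U : Ω → 𝓤) (V : Ω → 𝓥) (X : Ω → 𝓧) (Y : Ω → 𝓨) (Z : Ω → 𝓩)
    (hmc1 : CondIndep p U (fun ω => (X ω, Y ω, Z ω)) V)
    (hmc2 : CondIndep p (fun ω => (U ω, V ω)) (fun ω => (Y ω, Z ω)) X)
    (hXYV : condEnt p X (fun ω => (Y ω, V ω)) = 0) :
    condMutInf p Y V U - condMutInf p Z V U + condEnt p X (fun ω => (Z ω, V ω)) =
      condMutInf p X Y U - condMutInf p X Z U := by
  rw [condMutInf_sub_condMutInf_add_condEnt_of_markov p hp.1 U V X Y Z hmc1 hmc2, hXYV,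
    zero_add]
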